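/- For d = 3 and the T state |T⟩ = (ξ|0⟩ + |1⟩ + ξ^{−1}|2⟩)/√3 in ℂ³, where ξ = exp(2πi/9), the max-thauma SDP has optimal value inf{ ‖V‖_{W,1} : V Hermitian on ℂ³, V ≥ |T⟩⟨T| } = 1 + 2·sin(π/18); that is, θ_max(T) = log₂(1 + 2 sin(π/18)). -/

import Mathlib

open Matrix Complex BigOperators
open scoped ComplexOrder

noncomputable section

namespace Magic

/-- ω = exp(2πi/d) -/
def omegaC (d : ℕ) : ℂ := Complex.exp (2 * Real.pi * Complex.I / d)

/-- τ = exp((d+1)πi/d) -/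
def tauC (d : ℕ) : ℂ := Complex.exp ((d + 1) * Real.pi * Complex.I / d)

/-- Shift operator X|j⟩ = |j⊕1⟩. -/
def shiftX (d : ℕ) [NeZero d] : Matrix (ZMod d) (ZMod d) ℂ :=
  Matrix.of fun r c => if r = c + 1 then 1 else 0

/-- Boost operator Z|j⟩ = ω^j |j⟩. -/
def boostZ (d : ℕ) [NeZero d] : Matrix (ZMod d) (ZMod d) ℂ :=
  Matrix.diagonal fun j => omegaC d ^ j.val

/-- Heisenberg–Weyl operator T_u = τ^{-a₁a₂} Z^{a₁} X^{a₂}. -/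
def HW (d : ℕ) [NeZero d] (u : ZMod d × ZMod d) : Matrix (ZMod d) (ZMod d) ℂ :=
  tauC d ^ (-((u.1.val * u.2.val : ℕ) : ℤ)) • (boostZ d ^ u.1.val * shiftX d ^ u.2.val)

/-- A₀ = (1/d) ∑_u T_u. -/
def A0 (d : ℕ) [NeZero d] : Matrix (ZMod d) (ZMod d) ℂ :=
  (d : ℂ)⁻¹ • ∑ u : ZMod d × ZMod d, HW d u

/-- Phase-space point operators A_u = T_u A₀ T_u†. -/
def Apt (d : ℕ) [NeZero d] (u : ZMod d × ZMod d) : Matrix (ZMod d) (ZMod d) ℂ :=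
  HW d u * A0 d * (HW d u)ᴴ

/-- Discrete Wigner function W_V(u) = tr(A_u V)/d. -/
def wig (d : ℕ) [NeZero d] (V : Matrix (ZMod d) (ZMod d) ℂ) (u : ZMod d × ZMod d) : ℂ :=
  (Apt d u * V).trace / d

/-- Wigner trace norm ‖V‖_{W,1} = ∑_u |W_V(u)|. -/
def wnorm1 (d : ℕ) [NeZero d] (V : Matrix (ZMod d) (ZMod d) ℂ) : ℝ :=
  ∑ u : ZMod d × ZMod d, ‖wig d V u‖

/-- Wigner spectral norm ‖V‖_{W,∞} = d · max_u |W_V(u)|. -/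
def wnormInf (d : ℕ) [NeZero d] (V : Matrix (ZMod d) (ZMod d) ℂ) : ℝ :=
  (d : ℝ) * ⨆ u : ZMod d × ZMod d, ‖wig d V u‖

end Magic

namespace Magic

/-- The Strange state |S⟩ = (|1⟩ - |2⟩)/√2. -/
def strange : ZMod 3 → ℂ :=
  fun j => if j = 1 then ((Real.sqrt 2)⁻¹ : ℝ)
    else if j = 2 then (-(Real.sqrt 2)⁻¹ : ℝ) else 0

/-- The Norrell state |N⟩ = (-|0⟩ + 2|1⟩ - |2⟩)/√6. -/
def norrell : ZMod 3 → ℂ :=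
  fun j => if j = 1 then ((2 / Real.sqrt 6 : ℝ) : ℂ) else ((-(Real.sqrt 6)⁻¹ : ℝ) : ℂ)

/-- The H₊ state |H₊⟩ = ((1+√3)|0⟩ + |1⟩ + |2⟩)/√(2(3+√3)). -/
def hplus : ZMod 3 → ℂ :=
  fun j => if j = 0 then (((1 + Real.sqrt 3) / Real.sqrt (2 * (3 + Real.sqrt 3)) : ℝ) : ℂ)
    else (((Real.sqrt (2 * (3 + Real.sqrt 3)))⁻¹ : ℝ) : ℂ)

/-- ξ = exp(2πi/9). -/
def xi : ℂ := Complex.exp (2 * Real.pi * Complex.I / 9)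

/-- The T state |T⟩ = (ξ|0⟩ + |1⟩ + ξ⁻¹|2⟩)/√3. -/
def tket : ZMod 3 → ℂ :=
  fun j => (if j = 0 then xi else if j = 1 then 1 else xi⁻¹) / ((Real.sqrt 3 : ℝ) : ℂ)

/-- The rank-one projector |ψ⟩⟨ψ|. -/
def projOf (ψ : ZMod 3 → ℂ) : Matrix (ZMod 3) (ZMod 3) ℂ :=
  Matrix.vecMulVec ψ (star ψ)

end Magic

/-!
Since `A₀` is the parity operator `|r⟩ ↦ |-r⟩`, the phase-space point operators are
`A_{(a,b)} r c = [r + c = 2b] ω^{a(r-c)}`, which makes every Wigner function explicit.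
Write `cₖ = 2cos(2πk/9) = ξ^k + ξ^{-k}`; note `c₂ = 2sin(π/18)`.

Primal: `V* = |T⟩⟨T| + (c₂/3)|w⟩⟨w|` with `w = (1, ξ², ξ⁴)` dominates `|T⟩⟨T|`; its Wigner
function takes each of the values `1/3, c₂/3` three times and vanishes at `(1,0), (1,2), (2,1)`,
so `‖V*‖_{W,1} = 1 + c₂`.

Dual: put the weight `s_u = 1 - c₁ + c₂ ∈ [-1, 1]` on those three points and `s_u = 1`
elsewhere. Then `Y = 3⁻¹ ∑ s_u A_u = μ₁|p⟩⟨p| + μ₂|q⟩⟨q|` with `μ₁ = (1 + c₂)/3 ≥ 0` and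
`μ₂ = (2 - c₁)/3 ≥ 0`, where `|T⟩ = ξ p / √3` and `q ⟂ p`. Hence for every feasible `V`,
`‖V‖_{W,1} ≥ Re tr(Y V) ≥ tr(Y |T⟩⟨T|) = 3 μ₁ = 1 + c₂`.

All identities between elements of `ℚ(ξ)` reduce to `ξ⁶ + ξ³ + 1 = 0`.
-/

namespace Magic

open ZMod (stdAddChar)

section PhaseSpace

def half (d : ℕ) : ZMod d := ((d + 1) / 2 : ℕ)

lemma two_mul_half {d : ℕ} (hd : Odd d) : 2 * half d = 1 := by
  obtain ⟨k, rfl⟩ := hd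
  have : ((2 * k + 1 : ℕ) : ZMod (2 * k + 1)) = 0 := ZMod.natCast_self _
  rw [half, show (2 * k + 1 + 1) / 2 = k + 1 by omega]
  push_cast at this ⊢
  linear_combination this

variable {d : ℕ} [NeZero d]

lemma omegaC_pow (k : ℕ) : omegaC d ^ k = stdAddChar (k : ZMod d) := by
  have := ZMod.stdAddChar_coe (N := d) k
  push_cast at this
  rw [this, omegaC, ← Complex.exp_nat_mul]
  ring_nf

lemma tauC_zpow (hd : Odd d) (k : ℤ) : tauC d ^ k = stdAddChar (half d * (k : ZMod d)) := by
  obtain ⟨m, rfl⟩ := hd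
  have := ZMod.stdAddChar_coe (N := 2 * m + 1) ((m + 1 : ℕ) * k)
  push_cast at this
  rw [half, show (2 * m + 1 + 1) / 2 = m + 1 by omega, tauC, ← Complex.exp_int_mul]
  push_cast
  rw [this]
  ring_nf

lemma star_stdAddChar (x : ZMod d) : star (stdAddChar x) = stdAddChar (-x) := by
  rw [AddChar.map_neg_eq_inv, Complex.inv_def, ZMod.stdAddChar_apply]
  simp

lemma shiftX_pow_apply (n : ℕ) (r c : ZMod d) :
    (shiftX d ^ n) r c = if r = c + n then 1 else 0 := by
  induction n generalizing c with
  | zero => simp [Matrix.one_apply]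
  | succ n ih =>
    rw [pow_succ, Matrix.mul_apply, Finset.sum_eq_single (c + 1), ih]
    · simp [shiftX, add_assoc, add_comm (1 : ZMod d)]
    · intro b _ hb
      simp [shiftX, hb]
    · simp

lemma boostZ_pow (n : ℕ) :
    boostZ d ^ n = Matrix.diagonal fun j : ZMod d => stdAddChar (j * (n : ZMod d)) := by
  rw [boostZ, Matrix.diagonal_pow]
  congr 1
  funext j
  rw [Pi.pow_apply, ← pow_mul, omegaC_pow]
  push_cast [ZMod.natCast_val, ZMod.cast_id]
  rfl

lemma HW_apply (hd : Odd d) (a b r c : ZMod d) :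
    HW d (a, b) r c = if r = c + b then stdAddChar (a * (r - half d * b)) else 0 := by
  rw [HW, Matrix.smul_apply, boostZ_pow, Matrix.diagonal_mul, shiftX_pow_apply, tauC_zpow hd]
  simp only [smul_eq_mul, mul_ite, mul_one, mul_zero, ← AddChar.map_add_eq_mul]
  push_cast [ZMod.natCast_zmod_val]
  congr 2
  ring

lemma A0_apply (hd : Odd d) (r c : ZMod d) : A0 d r c = if r + c = 0 then 1 else 0 := by
  have hsum : ∑ u : ZMod d × ZMod d, HW d u r c =
      ∑ a : ZMod d, stdAddChar (a * (half d * (r + c))) := by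
    rw [Fintype.sum_prod_type]
    refine Finset.sum_congr rfl fun a _ => ?_
    rw [Finset.sum_eq_single (r - c)]
    · rw [HW_apply hd, if_pos (by ring)]
      congr 1
      linear_combination (-(a * r)) * two_mul_half hd
    · intro b _ hb
      rw [HW_apply hd, if_neg (fun h => hb (by rw [h]; ring))]
    · simp
  have hhalf : half d * (r + c) = 0 ↔ r + c = 0 := by
    refine ⟨fun h => ?_, fun h => by rw [h, mul_zero]⟩
    linear_combination 2 * h - (r + c) * two_mul_half hd
  rw [A0, Matrix.smul_apply, Matrix.sum_apply, hsum,
    AddChar.sum_mulShift _ (ZMod.isPrimitive_stdAddChar d), ZMod.card]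
  by_cases h : r + c = 0 <;> simp [hhalf, h, NeZero.ne]

lemma Apt_apply (hd : Odd d) (a b r c : ZMod d) :
    Apt d (a, b) r c = if r + c = 2 * b then stdAddChar (a * (r - c)) else 0 := by
  have hA0 (j : ZMod d) : (HW d (a, b) * A0 d) r j = HW d (a, b) r (-j) := by
    rw [Matrix.mul_apply, Finset.sum_eq_single (-j)]
    · simp [A0_apply hd]
    · intro k _ hk
      simp [A0_apply hd, add_eq_zero_iff_eq_neg, hk]
    · simp
  rw [Apt, Matrix.mul_apply, Finset.sum_eq_single (c - b)]
  · simp only [hA0, Matrix.conjTranspose_apply, HW_apply hd, sub_add_cancel, if_true]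
    by_cases h : r + c = 2 * b
    · rw [if_pos (by linear_combination h), if_pos h, star_stdAddChar,
        ← AddChar.map_add_eq_mul]
      congr 1
      ring
    · rw [if_neg (fun h' => h (by linear_combination h')), if_neg h, zero_mul]
  · intro j _ hj
    simp only [hA0, Matrix.conjTranspose_apply, HW_apply hd]
    rw [if_neg (show ¬c = j + b from fun h => hj (eq_sub_of_add_eq h.symm)), star_zero,
      mul_zero]
  · simp

lemma wig_apply (hd : Odd d) (V : Matrix (ZMod d) (ZMod d) ℂ) (a b : ZMod d) :
    wig d V (a, b) = (∑ r, stdAddChar (a * (2 * r - 2 * b)) * V (2 * b - r) r) / d := by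
  rw [wig, Matrix.trace]
  congr 1
  refine Finset.sum_congr rfl fun r _ => ?_
  rw [Matrix.diag_apply, Matrix.mul_apply, Finset.sum_eq_single (2 * b - r)]
  · rw [Apt_apply hd, if_pos (by ring)]
    congr 3
    ring
  · intro c _ hc
    rw [Apt_apply hd, if_neg (fun h => hc (by linear_combination h)), zero_mul]
  · simp

end PhaseSpace

section WeakDuality

def dualOperator (d : ℕ) [NeZero d] (s : ZMod d × ZMod d → ℝ) : Matrix (ZMod d) (ZMod d) ℂ :=
  (d : ℂ)⁻¹ • ∑ u, (s u : ℂ) • Apt d u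

variable {d : ℕ} [NeZero d]

lemma dualOperator_apply (hd : Odd d) (s : ZMod d × ZMod d → ℝ) (r c : ZMod d) :
    dualOperator d s r c =
      (∑ a, (s (a, half d * (r + c)) : ℂ) * stdAddChar (a * (r - c))) / d := by
  rw [dualOperator, Matrix.smul_apply, Matrix.sum_apply, smul_eq_mul, inv_mul_eq_div,
    Fintype.sum_prod_type]
  congr 1
  refine Finset.sum_congr rfl fun a _ => ?_
  rw [Finset.sum_eq_single (half d * (r + c))]
  · rw [Matrix.smul_apply, Apt_apply hd, if_pos, smul_eq_mul]
    linear_combination -(r + c) * two_mul_half hd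
  · intro b _ hb
    rw [Matrix.smul_apply, Apt_apply hd, if_neg, smul_zero]
    intro h
    exact hb (by linear_combination -half d * h - b * two_mul_half hd)
  · simp

lemma sum_mul_wig (s : ZMod d × ZMod d → ℝ) (V : Matrix (ZMod d) (ZMod d) ℂ) :
    ∑ u, (s u : ℂ) * wig d V u = (dualOperator d s * V).trace := by
  simp only [wig, dualOperator, Matrix.smul_mul, Matrix.sum_mul, Matrix.trace_smul,
    Matrix.trace_sum, smul_eq_mul, Finset.mul_sum]
  refine Finset.sum_congr rfl fun u _ => ?_
  ring

lemma re_trace_dualOperator_mul_le_wnorm1 (s : ZMod d × ZMod d → ℝ) (hs : ∀ u, |s u| ≤ 1)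
    (V : Matrix (ZMod d) (ZMod d) ℂ) : (dualOperator d s * V).trace.re ≤ wnorm1 d V := by
  rw [← sum_mul_wig, Complex.re_sum, wnorm1]
  gcongr with u
  rw [Complex.re_ofReal_mul]
  calc s u * (wig d V u).re ≤ |s u| * |(wig d V u).re| := by
        rw [← abs_mul]
        exact le_abs_self _
    _ ≤ 1 * ‖wig d V u‖ := by
        gcongr
        · exact hs u
        · exact Complex.abs_re_le_norm _
    _ = ‖wig d V u‖ := one_mul _

end WeakDuality

section Qutrit

lemma sum_zmod_three {M : Type*} [AddCommMonoid M] (f : ZMod 3 → M) :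
    ∑ j, f j = f 0 + f 1 + f 2 :=
  Fin.sum_univ_three f

lemma zmod_three_cases (x : ZMod 3) : x = 0 ∨ x = 1 ∨ x = 2 := by
  decide +revert

lemma val_one_three : (1 : ZMod 3).val = 1 := rfl

lemma val_two_three : (2 : ZMod 3).val = 2 := rfl

lemma half_three : half 3 = 2 := rfl

lemma xi_pow_nine : xi ^ 9 = 1 := by
  rw [xi, ← Complex.exp_nat_mul, ← Complex.exp_two_pi_mul_I]
  push_cast
  ring_nf

lemma xi_cyclotomic : xi ^ 6 + xi ^ 3 + 1 = 0 := by
  have hprim : IsPrimitiveRoot (xi ^ 3) 3 := by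
    rw [xi, ← Complex.exp_nat_mul]
    convert Complex.isPrimitiveRoot_exp 3 (by norm_num) using 2
    push_cast
    ring
  have h := hprim.geom_sum_eq_zero (by norm_num)
  simp only [Finset.sum_range_succ, Finset.sum_range_zero, zero_add, pow_zero, pow_one] at h
  linear_combination h

lemma xi_inv : xi⁻¹ = xi ^ 8 :=
  inv_eq_of_mul_eq_one_right (by rw [← pow_succ', xi_pow_nine])

lemma conj_xi : starRingEnd ℂ xi = xi ^ 8 := by
  rw [← xi_inv, xi, ← Complex.exp_conj, ← Complex.exp_neg]
  congr 1
  simp only [map_div₀, map_mul, Complex.conj_ofReal, Complex.conj_I, map_ofNat]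
  ring

lemma stdAddChar_three (x : ZMod 3) : stdAddChar x = xi ^ (3 * x.val) := by
  have hω : omegaC 3 = xi ^ 3 := by
    rw [omegaC, xi, ← Complex.exp_nat_mul]
    push_cast
    ring_nf
  rw [← ZMod.natCast_zmod_val x, ← omegaC_pow, hω, ← pow_mul, ZMod.natCast_zmod_val]

lemma ofReal_two_cos (k : ℕ) :
    ((2 * Real.cos (2 * Real.pi * k / 9) : ℝ) : ℂ) = xi ^ k + xi ^ (8 * k) := by
  rw [pow_mul, ← conj_xi, ← map_pow, xi, ← Complex.exp_nat_mul, ← Complex.exp_conj]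
  push_cast
  rw [Complex.two_cos]
  congr 2
  · ring
  · simp only [map_mul, map_div₀, Complex.conj_ofReal, Complex.conj_I, map_ofNat, map_natCast]
    ring

def c₁ : ℝ := 2 * Real.cos (2 * Real.pi / 9)

def c₂ : ℝ := 2 * Real.cos (4 * Real.pi / 9)

lemma ofReal_c₁ : (c₁ : ℂ) = xi + xi ^ 8 := by
  simpa [c₁] using ofReal_two_cos 1

lemma ofReal_c₂ : (c₂ : ℂ) = xi ^ 2 + xi ^ 16 := by
  rw [c₂, show 4 * Real.pi / 9 = 2 * Real.pi * (2 : ℕ) / 9 by push_cast; ring, ofReal_two_cos]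

lemma c₂_nonneg : 0 ≤ c₂ := by
  have : 0 ≤ Real.cos (4 * Real.pi / 9) :=
    Real.cos_nonneg_of_mem_Icc ⟨by linarith [Real.pi_pos], by linarith [Real.pi_pos]⟩
  rw [c₂]
  linarith

lemma c₂_le_c₁ : c₂ ≤ c₁ := by
  have := Real.cos_le_cos_of_nonneg_of_le_pi (x := 2 * Real.pi / 9) (y := 4 * Real.pi / 9)
    (by positivity) (by linarith [Real.pi_pos]) (by linarith [Real.pi_pos])
  rw [c₁, c₂]
  linarith

lemma c₁_le_two : c₁ ≤ 2 := by
  rw [c₁]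
  linarith [Real.cos_le_one (2 * Real.pi / 9)]

lemma trace_projOf_mul (v : ZMod 3 → ℂ) (M : Matrix (ZMod 3) (ZMod 3) ℂ) :
    (projOf v * M).trace = star v ⬝ᵥ M *ᵥ v := by
  rw [projOf, Matrix.vecMulVec_mul, Matrix.trace_vecMulVec, dotProduct_comm,
    Matrix.dotProduct_mulVec]

lemma re_trace_smul_projOf_mul_nonneg {μ : ℝ} (hμ : 0 ≤ μ) (v : ZMod 3 → ℂ)
    {M : Matrix (ZMod 3) (ZMod 3) ℂ} (hM : M.PosSemidef) :
    0 ≤ ((μ : ℂ) • projOf v * M).trace.re := by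
  rw [Matrix.smul_mul, Matrix.trace_smul, trace_projOf_mul, smul_eq_mul, Complex.re_ofReal_mul]
  exact mul_nonneg hμ (hM.re_dotProduct_nonneg v)

def pket : ZMod 3 → ℂ := fun j => xi ^ (8 * j.val)

def qket : ZMod 3 → ℂ := fun j => xi ^ (5 * j.val)

def wket : ZMod 3 → ℂ := fun j => xi ^ (2 * j.val)

lemma projOf_tket : projOf tket = (3 : ℂ)⁻¹ • projOf pket := by
  have h3 : ((Real.sqrt 3 : ℝ) : ℂ) ^ 2 = 3 := by
    rw [← Complex.ofReal_pow, Real.sq_sqrt (by norm_num)]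
    norm_num
  have h3' : ((Real.sqrt 3 : ℝ) : ℂ) ≠ 0 := by norm_num
  ext j k
  rcases zmod_three_cases j with rfl | rfl | rfl <;>
  rcases zmod_three_cases k with rfl | rfl | rfl <;>
  · simp +decide only [projOf, tket, pket, Matrix.vecMulVec_apply, Matrix.smul_apply,
      Pi.star_apply, star_div₀, star_pow, RCLike.star_def, Complex.conj_ofReal, conj_xi,
      xi_inv, ZMod.val_zero, val_one_three, val_two_three, smul_eq_mul, ↓reduceIte]
    field_simp
    grind [xi_pow_nine]

end Qutrit

section DualCertificate

def dualWeight (u : ZMod 3 × ZMod 3) : ℝ :=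
  if u ∈ ({(1, 0), (1, 2), (2, 1)} : Finset (ZMod 3 × ZMod 3)) then 1 - c₁ + c₂ else 1

lemma abs_dualWeight_le_one (u : ZMod 3 × ZMod 3) : |dualWeight u| ≤ 1 := by
  unfold dualWeight
  split_ifs
  · rw [abs_le]
    constructor <;> linarith [c₂_nonneg, c₂_le_c₁, c₁_le_two]
  · simp

lemma dualOperator_dualWeight :
    dualOperator 3 dualWeight =
      (((1 + c₂) / 3 : ℝ) : ℂ) • projOf pket + (((2 - c₁) / 3 : ℝ) : ℂ) • projOf qket := by
  ext r c
  rw [dualOperator_apply (by decide)]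
  rcases zmod_three_cases r with rfl | rfl | rfl <;>
  rcases zmod_three_cases c with rfl | rfl | rfl <;>
  · simp only [sum_zmod_three, half_three]
    reduce_mod_char
    simp +decide only [dualWeight, stdAddChar_three, projOf, Matrix.add_apply, Matrix.smul_apply,
      Matrix.vecMulVec_apply, pket, qket, Pi.star_apply, star_pow, RCLike.star_def, conj_xi,
      ZMod.val_zero, val_one_three, val_two_three, smul_eq_mul, ↓reduceIte]
    push_cast [ofReal_c₁, ofReal_c₂]
    grind [xi_cyclotomic]

lemma re_trace_dualOperator_mul_nonneg {M : Matrix (ZMod 3) (ZMod 3) ℂ} (hM : M.PosSemidef) :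
    0 ≤ (dualOperator 3 dualWeight * M).trace.re := by
  rw [dualOperator_dualWeight, Matrix.add_mul, Matrix.trace_add, Complex.add_re]
  exact add_nonneg (re_trace_smul_projOf_mul_nonneg (by linarith [c₂_nonneg]) _ hM)
    (re_trace_smul_projOf_mul_nonneg (by linarith [c₁_le_two]) _ hM)

lemma trace_dualOperator_mul_projOf_tket :
    (dualOperator 3 dualWeight * projOf tket).trace = 1 + c₂ := by
  rw [projOf_tket, dualOperator_dualWeight]
  simp only [Matrix.trace, Matrix.diag_apply, Matrix.mul_apply, sum_zmod_three, projOf,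
    Matrix.add_apply, Matrix.smul_apply, Matrix.vecMulVec_apply, pket, qket, Pi.star_apply,
    star_pow, RCLike.star_def, conj_xi, ZMod.val_zero, val_one_three, val_two_three, smul_eq_mul]
  push_cast [ofReal_c₁, ofReal_c₂]
  grind [xi_cyclotomic]

lemma one_add_c₂_le_wnorm1 (V : Matrix (ZMod 3) (ZMod 3) ℂ)
    (hV : (V - projOf tket).PosSemidef) : 1 + c₂ ≤ wnorm1 3 V :=
  calc 1 + c₂ = (dualOperator 3 dualWeight * projOf tket).trace.re := by
        rw [trace_dualOperator_mul_projOf_tket]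
        simp
    _ ≤ (dualOperator 3 dualWeight * V).trace.re := by
        have := re_trace_dualOperator_mul_nonneg hV
        rw [Matrix.mul_sub, Matrix.trace_sub, Complex.sub_re] at this
        linarith
    _ ≤ wnorm1 3 V := re_trace_dualOperator_mul_le_wnorm1 _ abs_dualWeight_le_one V

end DualCertificate

section OptimalOperator

def optimalV : Matrix (ZMod 3) (ZMod 3) ℂ := projOf tket + ((c₂ / 3 : ℝ) : ℂ) • projOf wket

def optimalWigner (u : ZMod 3 × ZMod 3) : ℝ :=
  if u ∈ ({(1, 0), (1, 2), (2, 1)} : Finset (ZMod 3 × ZMod 3)) then 0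
  else if u ∈ ({(0, 1), (2, 0), (2, 2)} : Finset (ZMod 3 × ZMod 3)) then c₂ / 3 else 1 / 3

lemma wig_optimalV (u : ZMod 3 × ZMod 3) : wig 3 optimalV u = optimalWigner u := by
  obtain ⟨a, b⟩ := u
  rw [wig_apply (by decide), optimalV, projOf_tket]
  rcases zmod_three_cases a with rfl | rfl | rfl <;>
  rcases zmod_three_cases b with rfl | rfl | rfl <;>
  · simp only [sum_zmod_three]
    reduce_mod_char
    simp +decide only [optimalWigner, stdAddChar_three, projOf, Matrix.add_apply,
      Matrix.smul_apply, Matrix.vecMulVec_apply, pket, wket, Pi.star_apply, star_pow,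
      RCLike.star_def, conj_xi, ZMod.val_zero, val_one_three, val_two_three, smul_eq_mul,
      ↓reduceIte]
    push_cast [ofReal_c₂]
    grind [xi_cyclotomic]

lemma wnorm1_optimalV : wnorm1 3 optimalV = 1 + c₂ := by
  have h : |c₂ / 3| = c₂ / 3 := abs_of_nonneg (by linarith [c₂_nonneg])
  simp +decide only [wnorm1, wig_optimalV, optimalWigner, Fintype.sum_prod_type, sum_zmod_three,
    Complex.norm_real, Real.norm_eq_abs, Finset.mem_insert, Finset.mem_singleton, Prod.mk.injEq,
    ↓reduceIte, h]
  norm_num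
  ring

lemma optimalV_sub_posSemidef : (optimalV - projOf tket).PosSemidef := by
  rw [optimalV, add_sub_cancel_left]
  exact (Matrix.posSemidef_vecMulVec_self_star wket).smul
    (Complex.zero_le_real.mpr (div_nonneg c₂_nonneg (by norm_num)))

lemma optimalV_isHermitian : optimalV.IsHermitian := by
  rw [← sub_add_cancel optimalV (projOf tket)]
  exact (optimalV_sub_posSemidef.add (Matrix.posSemidef_vecMulVec_self_star tket)).isHermitian

end OptimalOperator

/-- θ_max of the T state:
inf{ ‖V‖_{W,1} : V Hermitian, V ⪰ |T⟩⟨T| } = 1 + 2 sin(π/18). -/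
theorem tstate_maxThauma_sdp :
    sInf {x : ℝ | ∃ V : Matrix (ZMod 3) (ZMod 3) ℂ,
      V.IsHermitian ∧ (V - projOf tket).PosSemidef ∧ x = wnorm1 3 V}
      = 1 + 2 * Real.sin (Real.pi / 18) := by
  have hc₂ : 1 + 2 * Real.sin (Real.pi / 18) = 1 + c₂ := by
    rw [c₂, ← Real.cos_pi_div_two_sub]
    ring_nf
  rw [hc₂]
  refine IsLeast.csInf_eq ⟨⟨optimalV, optimalV_isHermitian, optimalV_sub_posSemidef,
    wnorm1_optimalV.symm⟩, ?_⟩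
  rintro x ⟨V, -, hV, rfl⟩
  exact one_add_c₂_le_wnorm1 V hV

end Magic
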